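/- arXiv:1001.4534 — 3 statements merged into one kernel-verified Lean document; each statement's English description precedes it below -/
import Mathlib

section
/- For a prime p, if n ≡ 0 (mod p) then (1/|SL(2,p)|) · Σ_{γ ∈ SL(2,p)} c_p(d_γ − n) = −1/(p+1), where d_γ denotes the lower-right entry of γ. -/
/-!
Since `p` is prime, `c_p(x) = p·[x = 0] - 1`, so summing over `SL(2, p)` only requires counting
the matrices with vanishing lower-right entry. These are `!![a, b; -b⁻¹, 0]` with `a` arbitrary
and `b ≠ 0`, so there are `p (p - 1)` of them among the `p (p² - 1)` elements of `SL(2, p)`,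
and the average is `p · p (p - 1) / (p (p² - 1)) - 1 = -1 / (p + 1)`.
-/

open Complex Real

/-- The Ramanujan sum `c_p(x) = Σ_{(a,p)=1} e(a x / p)`. -/
noncomputable def ramanujanSum (p : ℕ) [NeZero p] (x : ZMod p) : ℂ :=
  ∑ a : (ZMod p)ˣ, Complex.exp (2 * π * I * (((a : ZMod p).val : ℂ) * (x.val : ℂ)) / p)

open Matrix

theorem Fintype.sum_units_eq_sum_sub {G₀ M : Type*} [GroupWithZero G₀] [Fintype G₀]
    [DecidableEq G₀] [AddCommGroup M] (f : G₀ → M) :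
    ∑ a : G₀ˣ, f a = ∑ a, f a - f 0 := by
  rw [← Finset.sum_erase_eq_sub (Finset.mem_univ 0),
    ← Fintype.sum_equiv unitsEquivNeZero.symm _ _ fun _ => rfl]
  exact (Finset.sum_subtype _ (by simp) f).symm

section RamanujanSum

theorem ramanujanSum_eq_sum_stdAddChar (N : ℕ) [NeZero N] (x : ZMod N) :
    ramanujanSum N x = ∑ a : (ZMod N)ˣ, ZMod.stdAddChar ((a : ZMod N) * x) := by
  refine Finset.sum_congr rfl fun a _ => ?_
  have hcast : (a : ZMod N) * x = (((a : ZMod N).val * x.val : ℕ) : ZMod N) := by simp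
  rw [hcast, ZMod.stdAddChar_apply, ZMod.toCircle_natCast, Nat.cast_mul]

variable (p : ℕ) [Fact p.Prime]

theorem ramanujanSum_prime (x : ZMod p) :
    ramanujanSum p x = (if x = 0 then (p : ℂ) else 0) - 1 := by
  rw [ramanujanSum_eq_sum_stdAddChar,
    Fintype.sum_units_eq_sum_sub fun a => ZMod.stdAddChar (a * x),
    AddChar.sum_mulShift x (ZMod.isPrimitive_stdAddChar p)]
  simp

theorem sum_ramanujanSum_prime {ι : Type*} [Fintype ι] (f : ι → ZMod p) :
    ∑ i, ramanujanSum p (f i) =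
      p * (Finset.univ.filter fun i => f i = 0).card - Fintype.card ι := by
  simp only [ramanujanSum_prime, Finset.sum_sub_distrib, ← Finset.sum_filter, Finset.sum_const,
    nsmul_eq_mul, Finset.card_univ, mul_one, mul_comm]

end RamanujanSum

namespace Matrix.SpecialLinearGroup

theorem card_mul_card_units {n R : Type*} [Fintype n] [DecidableEq n] [Nonempty n]
    [CommRing R] :
    Nat.card (SpecialLinearGroup n R) * Nat.card Rˣ = Nat.card (GL n R) := by
  have hker : GeneralLinearGroup.det.ker = (toGL : SpecialLinearGroup n R →* GL n R).range :=
    SetLike.coe_injective range_toGL.symm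
  rw [← Subgroup.card_mul_index GeneralLinearGroup.det.ker, Subgroup.index_ker,
    MonoidHom.range_eq_top.mpr GeneralLinearGroup.det_surjective, Subgroup.card_top, hker,
    Nat.card_congr (MonoidHom.ofInjective toGL_injective).toEquiv]

variable {F : Type*} [Field F]

theorem card_fin_two [Fintype F] :
    Nat.card (SpecialLinearGroup (Fin 2) F) = Fintype.card F * (Fintype.card F ^ 2 - 1) := by
  classical
  have h := card_mul_card_units (n := Fin 2) (R := F)
  rw [card_GL_field, Nat.card_eq_fintype_card (α := Fˣ), Fintype.card_units,
    Fin.prod_univ_two, Fin.val_zero, Fin.val_one, pow_zero, pow_one] at h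
  set q := Fintype.card F
  have hq : 1 < q := Fintype.one_lt_card
  have hGL : (q ^ 2 - 1) * (q ^ 2 - q) = q * (q ^ 2 - 1) * (q - 1) := by
    have hq2 : q ≤ q ^ 2 := Nat.le_self_pow two_ne_zero q
    zify [hq.le, hq2, hq.le.trans hq2]
    ring
  exact Nat.eq_of_mul_eq_mul_right (Nat.sub_pos_of_lt hq) (h.trans hGL)

theorem apply_zero_one_mul_apply_one_zero (γ : SpecialLinearGroup (Fin 2) F) (h : γ 1 1 = 0) :
    γ 0 1 * γ 1 0 = -1 := by
  have hdet := γ.det_coe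
  rw [det_fin_two, h] at hdet
  linear_combination -hdet

theorem apply_zero_one_ne_zero (γ : SpecialLinearGroup (Fin 2) F) (h : γ 1 1 = 0) :
    γ 0 1 ≠ 0 := fun h01 => by
  simpa [h01] using apply_zero_one_mul_apply_one_zero γ h

def lowerRightZeroEquiv : {γ : SpecialLinearGroup (Fin 2) F // γ 1 1 = 0} ≃ F × Fˣ where
  toFun γ := (γ.1 0 0, Units.mk0 (γ.1 0 1) (apply_zero_one_ne_zero γ.1 γ.2))
  invFun x := ⟨⟨!![x.1, x.2; -x.2⁻¹, 0], by simp [det_fin_two_of]⟩, rfl⟩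
  left_inv := by
    rintro ⟨γ, hγ⟩
    have hb := apply_zero_one_mul_apply_one_zero γ hγ
    have hb0 := apply_zero_one_ne_zero γ hγ
    refine Subtype.ext <| SpecialLinearGroup.ext _ _ fun i j => ?_
    fin_cases i <;> fin_cases j <;> simp [hγ]
    field_simp
    linear_combination -hb
  right_inv x := by ext <;> simp

theorem card_apply_one_one_eq_zero [Fintype F] [DecidableEq F] :
    Fintype.card {γ : SpecialLinearGroup (Fin 2) F // γ 1 1 = 0} =
      Fintype.card F * (Fintype.card F - 1) := by
  rw [Fintype.card_congr lowerRightZeroEquiv, Fintype.card_prod, Fintype.card_units]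

end Matrix.SpecialLinearGroup

theorem sl2_ramanujan_average_zero (p : ℕ) [Fact p.Prime] (n : ZMod p) (hn : n = 0) :
    (1 / (Fintype.card (Matrix.SpecialLinearGroup (Fin 2) (ZMod p)) : ℂ)) *
      ∑ γ : Matrix.SpecialLinearGroup (Fin 2) (ZMod p),
        ramanujanSum p ((γ : Matrix (Fin 2) (Fin 2) (ZMod p)) 1 1 - n)
      = -(1 / ((p : ℂ) + 1)) := by
  subst hn
  simp only [sub_zero]
  rw [sum_ramanujanSum_prime, ← Fintype.card_subtype,
    SpecialLinearGroup.card_apply_one_one_eq_zero, ← Nat.card_eq_fintype_card,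
    SpecialLinearGroup.card_fin_two, ZMod.card]
  have hp : 1 < p := (Fact.out : p.Prime).one_lt
  have hp2 : 1 ≤ p ^ 2 := Nat.one_le_pow _ _ (by omega)
  push_cast [Nat.cast_sub hp.le, Nat.cast_sub hp2]
  rw [show (p : ℂ) ^ 2 - 1 = (p - 1) * (p + 1) by ring]
  have hp_ne_zero : (p : ℂ) ≠ 0 := by exact_mod_cast (by omega : p ≠ 0)
  have hp_sub_one : (p : ℂ) - 1 ≠ 0 := sub_ne_zero.2 (by exact_mod_cast hp.ne')
  have hp_add_one : (p : ℂ) + 1 ≠ 0 := by exact_mod_cast (by omega : p + 1 ≠ 0)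
  field_simp
  ring
end

section
/- Let Γ'(2) = [Γ(2), Γ(2)] be the commutator subgroup of the free group Γ(2) = ⟨A, B⟩ ≤ SL(2,ℤ), where A = ((1,2),(0,1)) and B = ((1,0),(2,1)). Then every element of Γ'(2) other than the identity has trace different from ±2; equivalently, Γ'(2) contains no nontrivial parabolic elements. -/
/-!
Ping-pong on integer vectors, sorted by slope, shows that `A` and `B` generate `Γ(2)` freely, so
`Γ'(2)` is the image of the words with vanishing exponent sums. A matrix of trace `2` fixes a
nonzero vector `v`, and a Euclidean descent by powers of `A` and `B` moves `v` to a multiple of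
`(1, 0)`, `(0, 1)` or `(1, 1)`, one for each cusp of `Γ(2)`. Conjugating accordingly, which stays
inside `Γ'(2) ≤ Γ(4)`, the matrix becomes a power of `A`, `B` or `(AB⁻¹)²`; these have nonzero
exponent sums, so the power is trivial. Trace `-2` never occurs, as traces in `Γ(4)` are `2 mod 16`.
-/

open Matrix

/-- The generator `A = [[1,2],[0,1]]` of `Γ(2)`. -/
def genA : Matrix.SpecialLinearGroup (Fin 2) ℤ := ⟨!![1, 2; 0, 1], by decide⟩

/-- The generator `B = [[1,0],[2,1]]` of `Γ(2)`. -/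
def genB : Matrix.SpecialLinearGroup (Fin 2) ℤ := ⟨!![1, 0; 2, 1], by decide⟩

/-- `Γ(2) = ⟨A, B⟩`. -/
def GammaTwo : Subgroup (Matrix.SpecialLinearGroup (Fin 2) ℤ) :=
  Subgroup.closure {genA, genB}

open CongruenceSubgroup MatrixGroups

theorem mem_Gamma_iff_dvd {N : ℕ} {γ : SL(2, ℤ)} :
    γ ∈ Γ(N) ↔ ∀ i j, (N : ℤ) ∣ ((γ : Matrix (Fin 2) (Fin 2) ℤ) - 1) i j := by
  simp [Gamma_mem, Fin.forall_fin_two, ← ZMod.intCast_zmod_eq_zero_iff_dvd, sub_eq_zero,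
    and_assoc]

theorem Gamma_le_Gamma_of_dvd {M N : ℕ} (h : M ∣ N) : Γ(N) ≤ Γ(M) := fun _ hγ =>
  mem_Gamma_iff_dvd.mpr fun i j =>
    (Int.natCast_dvd_natCast.mpr h).trans (mem_Gamma_iff_dvd.mp hγ i j)

/-- `(1 + N X)(1 + N Y) ≡ 1 + N (X + Y) ≡ (1 + N Y)(1 + N X) mod N²`. -/
theorem commutator_Gamma_le_Gamma_mul_self (N : ℕ) : ⁅Γ(N), Γ(N)⁆ ≤ Γ(N * N) := by
  have hdvd {x y : SL(2, ℤ)} (hx : x ∈ Γ(N)) (hy : y ∈ Γ(N)) (i j : Fin 2) :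
      ((N : ℤ) * N) ∣ (((x : Matrix (Fin 2) (Fin 2) ℤ) - 1) * (y - 1)) i j := by
    rw [Matrix.mul_apply]
    exact Finset.dvd_sum fun k _ =>
      mul_dvd_mul (mem_Gamma_iff_dvd.mp hx i k) (mem_Gamma_iff_dvd.mp hy k j)
  rw [Subgroup.commutator_le]
  intro g hg h hh
  rw [Gamma, MonoidHom.mem_ker, map_commutatorElement, commutatorElement_eq_one_iff_commute,
    Commute, SemiconjBy, ← map_mul, ← map_mul]
  have hcomm : ((h * g : SL(2, ℤ)) : Matrix (Fin 2) (Fin 2) ℤ) - (g * h : SL(2, ℤ)) =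
      (h - 1) * (g - 1) - (g - 1) * (h - 1) := by
    simp only [Matrix.SpecialLinearGroup.coe_mul]
    noncomm_ring
  ext i j
  change (((g * h : SL(2, ℤ)) : Matrix (Fin 2) (Fin 2) ℤ) i j : ZMod (N * N)) =
    ((h * g : SL(2, ℤ)) : Matrix (Fin 2) (Fin 2) ℤ) i j
  rw [ZMod.intCast_eq_intCast_iff_dvd_sub, Nat.cast_mul, ← Matrix.sub_apply, hcomm,
    Matrix.sub_apply]
  exact dvd_sub (hdvd hh hg i j) (hdvd hg hh i j)

theorem trace_modEq_two_of_mem_Gamma {N : ℕ} {γ : SL(2, ℤ)} (hγ : γ ∈ Γ(N)) :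
    (γ : Matrix (Fin 2) (Fin 2) ℤ).trace ≡ 2 [ZMOD N * N] := by
  obtain ⟨s, hs⟩ : (N : ℤ) ∣ γ 0 0 - 1 := by simpa using mem_Gamma_iff_dvd.mp hγ 0 0
  obtain ⟨b, hb⟩ : (N : ℤ) ∣ γ 0 1 := by simpa using mem_Gamma_iff_dvd.mp hγ 0 1
  obtain ⟨c, hc⟩ : (N : ℤ) ∣ γ 1 0 := by simpa using mem_Gamma_iff_dvd.mp hγ 1 0
  obtain ⟨t, ht⟩ : (N : ℤ) ∣ γ 1 1 - 1 := by simpa using mem_Gamma_iff_dvd.mp hγ 1 1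
  have hdet := γ.2
  rw [Matrix.det_fin_two] at hdet
  rw [Matrix.trace_fin_two, Int.modEq_iff_dvd]
  -- `det γ = 1` reads `N (s + t) = N² (b c - s t)`, and `2 - tr γ = -N (s + t)`.
  exact ⟨s * t - b * c, by
    linear_combination -hdet + (γ 1 1 - 1) * hs + N * s * ht - γ 1 0 * hb - N * b * hc⟩

theorem exists_smul_eq_self_of_trace_eq_two {γ : SL(2, ℤ)}
    (h : (γ : Matrix (Fin 2) (Fin 2) ℤ).trace = 2) : ∃ v : Fin 2 → ℤ, v ≠ 0 ∧ γ • v = v := by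
  have hdet : ((γ : Matrix (Fin 2) (Fin 2) ℤ) - 1).det = 0 := by
    have := γ.2
    rw [Matrix.det_fin_two] at this ⊢
    rw [Matrix.trace_fin_two] at h
    simp only [Matrix.sub_apply, Matrix.one_apply_eq, ne_eq, zero_ne_one, one_ne_zero,
      not_false_eq_true, Matrix.one_apply_ne, sub_zero]
    linear_combination this - h
  obtain ⟨v, hv, hγv⟩ := Matrix.exists_mulVec_eq_zero_iff.mpr hdet
  rw [Matrix.sub_mulVec, Matrix.one_mulVec, sub_eq_zero] at hγv
  exact ⟨v, hv, hγv⟩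

theorem smul_eq_self_iff_fin_two {γ : SL(2, ℤ)} {v : Fin 2 → ℤ} :
    γ • v = v ↔ γ 0 0 * v 0 + γ 0 1 * v 1 = v 0 ∧ γ 1 0 * v 0 + γ 1 1 * v 1 = v 1 := by
  rw [Matrix.SpecialLinearGroup.smul_def, Matrix.smul_eq_mulVec, Matrix.mulVec_fin_two,
    funext_iff, Fin.forall_fin_two]
  simp

theorem map_zpow_eq_one_add_zsmul {G R : Type*} [Group G] [Ring R] (f : G →* R) {g : G} {N : R}
    (hg : f g = 1 + N) (hN : N * N = 0) (k : ℤ) : f (g ^ k) = 1 + k • N := by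
  have hmul (a b : ℤ) : (1 + a • N) * (1 + b • N) = 1 + (a + b) • N := by
    simp only [add_mul, mul_add, one_mul, mul_one, smul_mul_smul, hN, smul_zero, add_smul]
    abel
  have hg' : f g = 1 + (1 : ℤ) • N := by rw [hg, one_smul]
  have hinv : f g⁻¹ = 1 + (-1 : ℤ) • N :=
    calc f g⁻¹ = f g⁻¹ * (f g * (1 + (-1 : ℤ) • N)) := by
          rw [hg', hmul, add_neg_cancel, zero_smul, add_zero, mul_one]
      _ = 1 + (-1 : ℤ) • N := by rw [← mul_assoc, ← map_mul, inv_mul_cancel, map_one, one_mul]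
  induction k using Int.induction_on with
  | zero => simp
  | succ k ih => rw [_root_.zpow_add_one, map_mul, ih, hg', hmul]
  | pred k ih => rw [_root_.zpow_sub_one, map_mul, ih, hinv, hmul, sub_eq_add_neg]

theorem eq_zero_of_zpow_mem_commutator {G A : Type*} [Group G] [AddCommGroup A]
    [NoZeroSMulDivisors ℤ A] (f : G →* Multiplicative A) {u : G} (hu : f u ≠ 1) {k : ℤ}
    (hk : u ^ k ∈ commutator G) : k = 0 := by
  have h := Abelianization.commutator_subset_ker f hk
  rw [MonoidHom.mem_ker, map_zpow] at h
  have := congrArg Multiplicative.toAdd h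
  rw [toAdd_zpow, toAdd_one, smul_eq_zero] at this
  exact this.resolve_right fun h' => hu (by simpa using congrArg Multiplicative.ofAdd h')

def nonzeroSubMulAction (G M : Type*) [Group G] [AddMonoid M] [DistribMulAction G M] :
    SubMulAction G M where
  carrier := {x | x ≠ 0}
  smul_mem' g _ hx := (smul_ne_zero_iff_ne g).mpr hx

theorem mem_nonzeroSubMulAction {G M : Type*} [Group G] [AddMonoid M] [DistribMulAction G M]
    {x : M} : x ∈ nonzeroSubMulAction G M ↔ x ≠ 0 :=
  Iff.rfl

theorem sq_add_sq_pos_of_ne_zero {v : Fin 2 → ℤ} (hv : v ≠ 0) : 0 < v 0 ^ 2 + v 1 ^ 2 := by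
  by_contra! h
  have h0 : v 0 = 0 := by nlinarith [sq_nonneg (v 0), sq_nonneg (v 1)]
  have h1 : v 1 = 0 := by nlinarith [sq_nonneg (v 0), sq_nonneg (v 1)]
  exact hv (funext (Fin.forall_fin_two.mpr ⟨h0, h1⟩))

theorem exists_natAbs_add_two_mul_lt {p q : ℤ} (hp : p ≠ 0) (h : p.natAbs < q.natAbs) :
    ∃ k : ℤ, (q + 2 * k * p).natAbs < q.natAbs := by
  by_cases h' : (q + 2 * p).natAbs < q.natAbs
  · exact ⟨1, by simpa using h'⟩
  · exact ⟨-1, by omega⟩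

local notation "ρ" => FreeGroup.lift ![genA, genB]

theorem lift_genA_genB_of_zero : ρ (FreeGroup.of 0) = genA := by
  simp

theorem lift_genA_genB_of_one : ρ (FreeGroup.of 1) = genB := by
  simp

theorem coe_genA_zpow (k : ℤ) :
    ((genA ^ k : SL(2, ℤ)) : Matrix (Fin 2) (Fin 2) ℤ) = !![1, 2 * k; 0, 1] := by
  rw [← Matrix.SpecialLinearGroup.coeMonoidHom_apply,
    map_zpow_eq_one_add_zsmul _ (N := !![0, 2; 0, 0]) (by decide) (by decide)]
  ext i j
  fin_cases i <;> fin_cases j <;> simp [mul_comm]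

theorem coe_genB_zpow (k : ℤ) :
    ((genB ^ k : SL(2, ℤ)) : Matrix (Fin 2) (Fin 2) ℤ) = !![1, 0; 2 * k, 1] := by
  rw [← Matrix.SpecialLinearGroup.coeMonoidHom_apply,
    map_zpow_eq_one_add_zsmul _ (N := !![0, 0; 2, 0]) (by decide) (by decide)]
  ext i j
  fin_cases i <;> fin_cases j <;> simp [mul_comm]

theorem coe_genA_mul_genB_inv_sq_zpow (k : ℤ) :
    ((((genA * genB⁻¹) ^ 2) ^ k : SL(2, ℤ)) : Matrix (Fin 2) (Fin 2) ℤ) =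
      !![1 + 4 * k, -(4 * k); 4 * k, 1 - 4 * k] := by
  rw [← Matrix.SpecialLinearGroup.coeMonoidHom_apply,
    map_zpow_eq_one_add_zsmul _ (N := !![4, -4; 4, -4]) (by decide) (by decide)]
  ext i j
  fin_cases i <;> fin_cases j <;> simp [mul_comm, sub_eq_add_neg]

theorem genA_zpow_smul (k : ℤ) (v : Fin 2 → ℤ) : genA ^ k • v = ![v 0 + 2 * k * v 1, v 1] := by
  rw [Matrix.SpecialLinearGroup.smul_def, Matrix.smul_eq_mulVec, coe_genA_zpow,
    Matrix.mulVec_fin_two]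
  simp [mul_assoc]

theorem genB_zpow_smul (k : ℤ) (v : Fin 2 → ℤ) : genB ^ k • v = ![v 0, v 1 + 2 * k * v 0] := by
  rw [Matrix.SpecialLinearGroup.smul_def, Matrix.smul_eq_mulVec, coe_genB_zpow,
    Matrix.mulVec_fin_two]
  simp [mul_assoc, add_comm]

/-- In terms of the slope `s = v 0 / v 1 ∈ ℚ ∪ {∞}` this is `[1, ∞]` for `A` and `[0, 1)` for
`B`, and `repellingSet` is `(-∞, -1)` for `A` and `[-1, 0)` for `B`; since `A` acts by
`s ↦ s + 2` and `B` by `1/s ↦ 1/s + 2`, each generator maps the complement of its repelling set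
onto its attracting set. -/
def attractingSet : Fin 2 → Set (Fin 2 → ℤ) :=
  ![{v | 0 ≤ v 1 * (v 0 - v 1)}, {v | 0 < v 0 * (v 1 - v 0) ∨ v 0 = 0}]

def repellingSet : Fin 2 → Set (Fin 2 → ℤ) :=
  ![{v | v 1 * (v 0 + v 1) < 0}, {v | v 0 * (v 0 + v 1) ≤ 0 ∧ v 0 ≠ 0}]

theorem disjoint_pingPongSets {v : Fin 2 → ℤ} (hv : v ≠ 0) :
    (v ∈ attractingSet 0 → v ∉ attractingSet 1) ∧ (v ∈ repellingSet 0 → v ∉ repellingSet 1) ∧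
      ∀ i j, v ∈ attractingSet i → v ∉ repellingSet j := by
  have h₀ := sq_add_sq_pos_of_ne_zero hv
  have h₁ := sq_nonneg (v 0 - v 1)
  have h₂ := sq_nonneg (v 0 + v 1)
  refine ⟨fun hX hX' => ?_, fun hY hY' => ?_, fun i j hX hY => ?_⟩
  on_goal 3 => fin_cases i <;> fin_cases j
  all_goals
    simp only [attractingSet, repellingSet, Set.mem_ofPred_eq, Matrix.cons_val_zero,
      Matrix.cons_val_one, Matrix.cons_val_fin_one, Fin.zero_eta, Fin.mk_one, Fin.isValue] at *
    (try casesm* _ ∨ _, _ ∧ _) <;> first | contradiction | nlinarith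

theorem smul_mem_attractingSet (i : Fin 2) {v : Fin 2 → ℤ} (hv : v ∉ repellingSet i) :
    ![genA, genB] i • v ∈ attractingSet i := by
  fin_cases i
  · simp only [Fin.zero_eta, Fin.isValue, Matrix.cons_val_zero, attractingSet, repellingSet,
      Set.mem_ofPred_eq, not_lt] at hv ⊢
    rw [← zpow_one genA, genA_zpow_smul]
    simp only [Matrix.cons_val_zero, Matrix.cons_val_one, Matrix.cons_val_fin_one]
    linarith
  · simp only [Fin.mk_one, Fin.isValue, Matrix.cons_val_one, Matrix.cons_val_fin_one,
      attractingSet, repellingSet, Set.mem_ofPred_eq, not_and_or, not_le, not_not] at hv ⊢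
    rw [← zpow_one genB, genB_zpow_smul]
    simp only [Matrix.cons_val_zero, Matrix.cons_val_one, Matrix.cons_val_fin_one]
    rcases hv with hv | hv
    · exact Or.inl (by linarith)
    · exact Or.inr hv

theorem inv_smul_mem_repellingSet (i : Fin 2) {v : Fin 2 → ℤ} (hv : v ∉ attractingSet i) :
    (![genA, genB] i)⁻¹ • v ∈ repellingSet i := by
  fin_cases i
  · simp only [Fin.zero_eta, Fin.isValue, Matrix.cons_val_zero, attractingSet, repellingSet,
      Set.mem_ofPred_eq, not_le] at hv ⊢
    rw [← _root_.zpow_neg_one, genA_zpow_smul]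
    simp only [Matrix.cons_val_zero, Matrix.cons_val_one, Matrix.cons_val_fin_one]
    linarith
  · simp only [Fin.mk_one, Fin.isValue, Matrix.cons_val_one, Matrix.cons_val_fin_one,
      attractingSet, repellingSet, Set.mem_ofPred_eq, not_or, not_lt] at hv ⊢
    rw [← _root_.zpow_neg_one, genB_zpow_smul]
    simp only [Matrix.cons_val_zero, Matrix.cons_val_one, Matrix.cons_val_fin_one]
    exact ⟨by linarith, hv.2⟩

theorem injective_lift_genA_genB : Function.Injective ρ := by
  refine FreeGroup.injective_lift_of_ping_pong _
    (fun i => {v : nonzeroSubMulAction SL(2, ℤ) (Fin 2 → ℤ) | (v : Fin 2 → ℤ) ∈ attractingSet i})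
    (fun i => {v | (v : Fin 2 → ℤ) ∈ repellingSet i}) ?nonempty ?disjointAttracting
    ?disjointRepelling ?disjointAttractingRepelling ?mapsTo ?mapsTo_inv
  case nonempty =>
    intro i
    fin_cases i
    · exact ⟨⟨![1, 0], mem_nonzeroSubMulAction.mpr (by decide)⟩, by simp [attractingSet]⟩
    · exact ⟨⟨![0, 1], mem_nonzeroSubMulAction.mpr (by decide)⟩, by simp [attractingSet]⟩
  case disjointAttracting =>
    intro i j hij
    fin_cases i <;> fin_cases j
    exacts [absurd rfl hij,
      Set.disjoint_left.mpr fun v hX hX' => (disjoint_pingPongSets v.2).1 hX hX',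
      Set.disjoint_right.mpr fun v hX hX' => (disjoint_pingPongSets v.2).1 hX hX',
      absurd rfl hij]
  case disjointRepelling =>
    intro i j hij
    fin_cases i <;> fin_cases j
    exacts [absurd rfl hij,
      Set.disjoint_left.mpr fun v hY hY' => (disjoint_pingPongSets v.2).2.1 hY hY',
      Set.disjoint_right.mpr fun v hY hY' => (disjoint_pingPongSets v.2).2.1 hY hY',
      absurd rfl hij]
  case disjointAttractingRepelling =>
    intro i j
    exact Set.disjoint_left.mpr fun v hX hY => (disjoint_pingPongSets v.2).2.2 i j hX hY
  case mapsTo =>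
    rintro i _ ⟨v, hv, rfl⟩
    exact smul_mem_attractingSet i hv
  case mapsTo_inv =>
    rintro i _ ⟨v, hv, rfl⟩
    exact inv_smul_mem_repellingSet i hv

theorem map_commutator_lift_genA_genB :
    (commutator (FreeGroup (Fin 2))).map ρ = ⁅GammaTwo, GammaTwo⁆ := by
  rw [commutator_def, Subgroup.map_commutator, ← MonoidHom.range_eq_map,
    FreeGroup.range_lift_eq_closure, Matrix.range_cons_cons_empty, GammaTwo]

theorem GammaTwo_le_Gamma_two : GammaTwo ≤ Γ(2) := by
  rw [GammaTwo, Subgroup.closure_le, Set.insert_subset_iff, Set.singleton_subset_iff]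
  constructor <;> rw [SetLike.mem_coe, Gamma_mem] <;> decide

theorem commutator_GammaTwo_le_Gamma_four : ⁅GammaTwo, GammaTwo⁆ ≤ Γ(4) :=
  (Subgroup.commutator_mono GammaTwo_le_Gamma_two GammaTwo_le_Gamma_two).trans
    (commutator_Gamma_le_Gamma_mul_self 2)

/-- The vectors over the cusps `∞`, `0` and `1` of `Γ(2)`. -/
def cuspRepresentatives : Set (Fin 2 → ℤ) := {v | v ≠ 0 ∧ (v 1 = 0 ∨ v 0 = 0 ∨ v 0 = v 1)}

theorem exists_smul_mem_cuspRepresentatives (v : Fin 2 → ℤ) (hv : v ≠ 0) :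
    ∃ x : FreeGroup (Fin 2), ρ x • v ∈ cuspRepresentatives := by
  induction h : (v 0).natAbs + (v 1).natAbs using Nat.strong_induction_on generalizing v with
  | _ n ih =>
  by_cases hc : v ∈ cuspRepresentatives
  · exact ⟨1, by simpa using hc⟩
  obtain ⟨hq, hp, hpq⟩ : v 1 ≠ 0 ∧ v 0 ≠ 0 ∧ v 0 ≠ v 1 := by
    simpa [cuspRepresentatives, hv, not_or] using hc
  have hv' (x : FreeGroup (Fin 2)) : ρ x • v ≠ 0 := (smul_ne_zero_iff_ne _).mpr hv
  by_cases hanti : v 0 = -v 1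
  · refine ⟨FreeGroup.of 0, hv' _, Or.inr (Or.inr ?_)⟩
    rw [lift_genA_genB_of_zero, ← zpow_one genA, genA_zpow_smul]
    simp only [Matrix.cons_val_zero, Matrix.cons_val_one, Matrix.cons_val_fin_one]
    linarith
  have descend (x : FreeGroup (Fin 2)) (hx : ((ρ x • v) 0).natAbs + ((ρ x • v) 1).natAbs < n) :
      ∃ y : FreeGroup (Fin 2), ρ y • v ∈ cuspRepresentatives := by
    obtain ⟨y, hy⟩ := ih _ (h ▸ hx) (ρ x • v) (hv' x) rfl
    exact ⟨y * x, by rwa [map_mul, mul_smul]⟩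
  rcases lt_or_gt_of_ne (show (v 0).natAbs ≠ (v 1).natAbs by omega) with hlt | hlt
  · obtain ⟨k, hk⟩ := exists_natAbs_add_two_mul_lt hp hlt
    refine descend (FreeGroup.of 1 ^ k) ?_
    simp only [map_zpow, lift_genA_genB_of_one, genB_zpow_smul, Matrix.cons_val_zero,
      Matrix.cons_val_one, Matrix.cons_val_fin_one]
    omega
  · obtain ⟨k, hk⟩ := exists_natAbs_add_two_mul_lt hq hlt
    refine descend (FreeGroup.of 0 ^ k) ?_
    simp only [map_zpow, lift_genA_genB_of_zero, genA_zpow_smul, Matrix.cons_val_zero,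
      Matrix.cons_val_one, Matrix.cons_val_fin_one]
    omega

theorem exists_eq_genA_zpow_of_smul_eq_self {γ : SL(2, ℤ)} (hγ : γ ∈ Γ(2)) {v : Fin 2 → ℤ}
    (hv0 : v 0 ≠ 0) (hv1 : v 1 = 0) (hfix : γ • v = v) : ∃ k : ℤ, γ = genA ^ k := by
  obtain ⟨h0, h1⟩ := smul_eq_self_iff_fin_two.mp hfix
  rw [hv1, mul_zero, add_zero] at h0 h1
  have ha : γ 0 0 = 1 := mul_right_cancel₀ hv0 (by rw [h0, one_mul])
  have hc : γ 1 0 = 0 := (mul_eq_zero.mp h1).resolve_right hv0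
  have hdet := γ.2
  rw [Matrix.det_fin_two, ha, hc] at hdet
  obtain ⟨k, hk⟩ : (2 : ℤ) ∣ γ 0 1 := by simpa using mem_Gamma_iff_dvd.mp hγ 0 1
  refine ⟨k, Subtype.ext ?_⟩
  rw [coe_genA_zpow, Matrix.eta_fin_two (γ : Matrix (Fin 2) (Fin 2) ℤ), ha, hk, hc,
    show γ 1 1 = 1 by linarith]

theorem exists_eq_genB_zpow_of_smul_eq_self {γ : SL(2, ℤ)} (hγ : γ ∈ Γ(2)) {v : Fin 2 → ℤ}
    (hv0 : v 0 = 0) (hv1 : v 1 ≠ 0) (hfix : γ • v = v) : ∃ k : ℤ, γ = genB ^ k := by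
  obtain ⟨h0, h1⟩ := smul_eq_self_iff_fin_two.mp hfix
  rw [hv0, mul_zero, zero_add] at h0 h1
  have hb : γ 0 1 = 0 := (mul_eq_zero.mp h0).resolve_right hv1
  have hd : γ 1 1 = 1 := mul_right_cancel₀ hv1 (by rw [h1, one_mul])
  have hdet := γ.2
  rw [Matrix.det_fin_two, hb, hd] at hdet
  obtain ⟨k, hk⟩ : (2 : ℤ) ∣ γ 1 0 := by simpa using mem_Gamma_iff_dvd.mp hγ 1 0
  refine ⟨k, Subtype.ext ?_⟩
  rw [coe_genB_zpow, Matrix.eta_fin_two (γ : Matrix (Fin 2) (Fin 2) ℤ), hb, hk, hd,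
    show γ 0 0 = 1 by linarith]

theorem exists_eq_genA_mul_genB_inv_sq_zpow_of_smul_eq_self {γ : SL(2, ℤ)} (hγ : γ ∈ Γ(4))
    {v : Fin 2 → ℤ} (hv : v 0 = v 1) (hv1 : v 1 ≠ 0) (hfix : γ • v = v) :
    ∃ k : ℤ, γ = ((genA * genB⁻¹) ^ 2) ^ k := by
  obtain ⟨h0, h1⟩ := smul_eq_self_iff_fin_two.mp hfix
  rw [hv, ← add_mul] at h0 h1
  have hab : γ 0 0 + γ 0 1 = 1 := mul_right_cancel₀ hv1 (by rw [h0, one_mul])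
  have hcd : γ 1 0 + γ 1 1 = 1 := mul_right_cancel₀ hv1 (by rw [h1, one_mul])
  have hdet := γ.2
  rw [Matrix.det_fin_two] at hdet
  obtain ⟨k, hk⟩ : (4 : ℤ) ∣ γ 0 0 - 1 := by simpa using mem_Gamma_iff_dvd.mp hγ 0 0
  refine ⟨k, Subtype.ext ?_⟩
  -- with `a + b = c + d = 1`, `det γ = 1` becomes `a - c = 1`
  rw [coe_genA_mul_genB_inv_sq_zpow, Matrix.eta_fin_two (γ : Matrix (Fin 2) (Fin 2) ℤ),
    show γ 0 0 = 1 + 4 * k by linarith, show γ 0 1 = -(4 * k) by linarith,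
    show γ 1 0 = 4 * k by linear_combination hk - hdet + γ 0 0 * hcd - γ 1 0 * hab,
    show γ 1 1 = 1 - 4 * k by linear_combination hcd - hk + hdet - γ 0 0 * hcd + γ 1 0 * hab]

def exponentSums : FreeGroup (Fin 2) →* Multiplicative (Fin 2 → ℤ) :=
  FreeGroup.lift fun i => Multiplicative.ofAdd (Pi.single i 1)

theorem exists_zpow_eq_of_smul_eq_self {γ : SL(2, ℤ)} (hγ : γ ∈ Γ(4)) {v : Fin 2 → ℤ}
    (hv : v ∈ cuspRepresentatives) (hfix : γ • v = v) :
    ∃ u : FreeGroup (Fin 2), exponentSums u ≠ 1 ∧ ∃ k : ℤ, γ = ρ u ^ k := by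
  have hγ₂ : γ ∈ Γ(2) := Gamma_le_Gamma_of_dvd (by norm_num) hγ
  obtain ⟨hv0, hcusp⟩ := hv
  have hv' : ¬(v 0 = 0 ∧ v 1 = 0) := fun h => hv0 (funext (Fin.forall_fin_two.mpr h))
  rcases hcusp with hv1 | hv1 | hv1
  · obtain ⟨k, rfl⟩ := exists_eq_genA_zpow_of_smul_eq_self hγ₂ (fun h => hv' ⟨h, hv1⟩) hv1 hfix
    exact ⟨FreeGroup.of 0, by simp [exponentSums], k, by simp⟩
  · obtain ⟨k, rfl⟩ := exists_eq_genB_zpow_of_smul_eq_self hγ₂ hv1 (fun h => hv' ⟨hv1, h⟩) hfix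
    exact ⟨FreeGroup.of 1, by simp [exponentSums], k, by simp⟩
  · obtain ⟨k, rfl⟩ :=
      exists_eq_genA_mul_genB_inv_sq_zpow_of_smul_eq_self hγ hv1
        (fun h => hv' ⟨hv1.trans h, h⟩) hfix
    refine ⟨(FreeGroup.of 0 * (FreeGroup.of 1)⁻¹) ^ 2, fun h => ?_, k, by simp⟩
    simpa [exponentSums] using congrArg (fun x : Multiplicative (Fin 2 → ℤ) => x.toAdd 0) h

theorem eq_one_of_mem_commutator_of_smul_eq_self {w : FreeGroup (Fin 2)}
    (hw : w ∈ commutator (FreeGroup (Fin 2))) {v : Fin 2 → ℤ} (hv : v ≠ 0)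
    (hfix : ρ w • v = v) : w = 1 := by
  obtain ⟨x, hx⟩ := exists_smul_mem_cuspRepresentatives v hv
  have hconj : x * w * x⁻¹ ∈ commutator (FreeGroup (Fin 2)) :=
    Subgroup.Normal.conj_mem inferInstance w hw x
  have hΓ : ρ (x * w * x⁻¹) ∈ Γ(4) := commutator_GammaTwo_le_Gamma_four <|
    map_commutator_lift_genA_genB ▸ Subgroup.mem_map_of_mem _ hconj
  obtain ⟨u, hu, k, hk⟩ := exists_zpow_eq_of_smul_eq_self hΓ hx <| by
    rw [map_mul, map_mul, map_inv, mul_smul, mul_smul, inv_smul_smul, hfix]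
  have hpow : x * w * x⁻¹ = u ^ k := injective_lift_genA_genB (by rw [hk, map_zpow])
  have hk0 : k = 0 := eq_zero_of_zpow_mem_commutator exponentSums hu (hpow ▸ hconj)
  rw [hk0, zpow_zero] at hpow
  exact conj_eq_one_iff.mp hpow

theorem commutator_gamma_two_no_parabolics
    (γ : Matrix.SpecialLinearGroup (Fin 2) ℤ)
    (hγ : γ ∈ ⁅GammaTwo, GammaTwo⁆) (hne : γ ≠ 1) :
    Matrix.trace (γ : Matrix (Fin 2) (Fin 2) ℤ) ≠ 2 ∧
      Matrix.trace (γ : Matrix (Fin 2) (Fin 2) ℤ) ≠ -2 := by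
  refine ⟨fun htr => hne ?_, fun htr => ?_⟩
  · rw [← map_commutator_lift_genA_genB] at hγ
    obtain ⟨w, hw, rfl⟩ := hγ
    obtain ⟨v, hv, hfix⟩ := exists_smul_eq_self_of_trace_eq_two htr
    rw [eq_one_of_mem_commutator_of_smul_eq_self hw hv hfix, map_one]
  · have h := trace_modEq_two_of_mem_Gamma (commutator_GammaTwo_le_Gamma_four hγ)
    rw [htr] at h
    exact absurd h (by decide)
end

section
/- Let q, q' ≥ 1, gcd(a,q) = gcd(a',q') = 1, N ≥ 1, and σ < 1/4 − log 4 / log N with q, q' < N^{1/2}. Let y = (y₁,y₂), y' = (y₁',y₂') ∈ ℤ² with |y|, |y'| < N^σ, and let β be real with |β| < 2/(Q N^{1/2}) where Q/2 ≤ q, q' < Q. Set θ = a/q + β, θ' = a'/q' + β. If ‖y₁θ − y₁'θ'‖ < 1/(10 N^{1−σ}) and ‖y₂θ − y₂'θ'‖ < 1/(10 N^{1−σ}) (where ‖·‖ denotes distance to the nearest integer), then y₂'y₁ − y₁'y₂ ≡ 0 (mod lcm(q,q')). -/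
open Real

/-- Distance from a real number to the nearest integer. -/
noncomputable def distNearestInt (x : ℝ) : ℝ := |x - round x|

/-!
With `D = y₂' y₁ - y₁' y₂`, `θ = a / q + β` and `θ' = a' / q' + β`, the identities
`D θ = y₂' (y₁ θ - y₁' θ') - y₁' (y₂ θ - y₂' θ')` and
`D θ' = y₂ (y₁ θ - y₁' θ') - y₁ (y₂ θ - y₂' θ')` put `D θ` and `D θ'` within
`2 N^σ / (10 N^(1-σ)) = N^(2σ) / (5N)` of an integer. Since `|D| ≤ 2 N^(2σ)` and
`|β| < 2 / (Q √N)`, the numbers `D a / q` and `D a' / q'` are then within `1 / q`, resp. `1 / q'`,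
of an integer, because `N^(2σ) < √N / 16`. A fraction `D a / q` with `a` prime to `q` is that
close to an integer only if it is one, so `q ∣ D` and `q' ∣ D`.
-/

theorem distNearestInt_nonneg (x : ℝ) : 0 ≤ distNearestInt x :=
  abs_nonneg _

theorem distNearestInt_le_abs_sub_intCast (x : ℝ) (m : ℤ) : distNearestInt x ≤ |x - m| :=
  round_le x m

theorem distNearestInt_le_add_abs_sub (x y : ℝ) :
    distNearestInt x ≤ distNearestInt y + |x - y| :=
  calc distNearestInt x ≤ |x - round y| := distNearestInt_le_abs_sub_intCast x _
    _ ≤ |x - y| + |y - round y| := abs_sub_le _ _ _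
    _ = distNearestInt y + |x - y| := add_comm _ _

theorem distNearestInt_intCast_mul_sub_le (u v : ℤ) (x y : ℝ) :
    distNearestInt (u * x - v * y) ≤ |(u : ℝ)| * distNearestInt x + |(v : ℝ)| * distNearestInt y :=
  calc distNearestInt (u * x - v * y)
      ≤ |u * x - v * y - ((u * round x - v * round y : ℤ) : ℝ)| :=
        distNearestInt_le_abs_sub_intCast _ _
    _ = |u * (x - round x) - v * (y - round y)| := by push_cast; ring_nf
    _ ≤ |u * (x - round x)| + |v * (y - round y)| := abs_sub _ _
    _ = |(u : ℝ)| * distNearestInt x + |(v : ℝ)| * distNearestInt y := by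
        rw [abs_mul, abs_mul, distNearestInt, distNearestInt]

theorem distNearestInt_intCast_mul_sub_le_two_mul {u v : ℤ} {x y A ε : ℝ}
    (hu : |(u : ℝ)| ≤ A) (hv : |(v : ℝ)| ≤ A)
    (hx : distNearestInt x ≤ ε) (hy : distNearestInt y ≤ ε) :
    distNearestInt (u * x - v * y) ≤ 2 * A * ε := by
  have hA : 0 ≤ A := (abs_nonneg _).trans hu
  calc distNearestInt (u * x - v * y)
      ≤ |(u : ℝ)| * distNearestInt x + |(v : ℝ)| * distNearestInt y :=
        distNearestInt_intCast_mul_sub_le u v x y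
    _ ≤ A * ε + A * ε := add_le_add (mul_le_mul hu hx (distNearestInt_nonneg x) hA)
          (mul_le_mul hv hy (distNearestInt_nonneg y) hA)
    _ = 2 * A * ε := by ring

theorem dvd_of_mul_distNearestInt_lt {r : ℕ} (hr : 0 < r) {a D : ℤ} (ha : IsCoprime a r)
    (h : r * distNearestInt (D * (a / r)) < 1) : (r : ℤ) ∣ D := by
  have hr' : (0 : ℝ) < r := by exact_mod_cast hr
  set m := round ((D : ℝ) * (a / r))
  have hlt : |((D * a - r * m : ℤ) : ℝ)| < 1 := by
    calc |((D * a - r * m : ℤ) : ℝ)| = |(r : ℝ) * ((D : ℝ) * (a / r) - m)| := by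
          congr 1; push_cast; field_simp
      _ = r * distNearestInt (D * (a / r)) := by rw [abs_mul, abs_of_pos hr', distNearestInt]
      _ < 1 := h
  have heq : D * a - r * m = 0 := Int.abs_lt_one_iff.mp (by exact_mod_cast hlt)
  exact ha.symm.dvd_of_dvd_mul_right ⟨m, by linarith⟩

theorem dvd_of_mul_distNearestInt_add_lt {r : ℕ} (hr : 0 < r) {a D : ℤ} (ha : IsCoprime a r)
    {β : ℝ} (h : r * (distNearestInt (D * (a / r + β)) + |(D : ℝ)| * |β|) < 1) :
    (r : ℤ) ∣ D := by
  refine dvd_of_mul_distNearestInt_lt hr ha (lt_of_le_of_lt ?_ h)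
  gcongr
  calc distNearestInt (D * (a / r))
      ≤ distNearestInt (D * (a / r + β)) + |D * (a / r) - D * (a / r + β)| :=
        distNearestInt_le_add_abs_sub _ _
    _ = distNearestInt (D * (a / r + β)) + |(D : ℝ)| * |β| := by
        rw [← abs_mul, ← abs_neg]; ring_nf

/-- Here `s` plays the role of `√N` and `A` that of `N ^ σ`. -/
theorem dvd_of_distNearestInt_le_of_lt_sqrt {r : ℕ} (hr : 0 < r) {a D : ℤ}
    (ha : IsCoprime a r) {s Q A β : ℝ} (hrs : r < s) (hrQ : r < Q) (hβ : |β| < 2 / (Q * s))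
    (hA : 16 * A ^ 2 < s) (hD : |(D : ℝ)| ≤ 2 * A ^ 2)
    (hθ : distNearestInt (D * (a / r + β)) ≤ A ^ 2 / (5 * s ^ 2)) : (r : ℤ) ∣ D := by
  refine dvd_of_mul_distNearestInt_add_lt hr ha (β := β) ?_
  have hr' : (0 : ℝ) < r := by exact_mod_cast hr
  have hs : 0 < s := hr'.trans hrs
  have hQ : 0 < Q := hr'.trans hrQ
  have hrβ : r * |β| < 2 / s :=
    calc r * |β| ≤ Q * |β| := by gcongr
      _ < Q * (2 / (Q * s)) := by gcongr
      _ = 2 / s := by field_simp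
  have h₁ : r * distNearestInt (D * (a / r + β)) < 1 / 80 :=
    calc r * distNearestInt (D * (a / r + β)) ≤ s * (A ^ 2 / (5 * s ^ 2)) := by
          gcongr; exact distNearestInt_nonneg _
      _ = A ^ 2 / (5 * s) := by field_simp
      _ < 1 / 80 := by rw [div_lt_div_iff₀ (by positivity) (by norm_num)]; linarith
  have h₂ : r * (|(D : ℝ)| * |β|) < 1 / 2 :=
    calc r * (|(D : ℝ)| * |β|) = |(D : ℝ)| * (r * |β|) := by ring
      _ ≤ 2 * A ^ 2 * (2 / s) := by gcongr
      _ = 4 * A ^ 2 / s := by ring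
      _ < 1 / 2 := by rw [div_lt_div_iff₀ hs (by norm_num)]; linarith
  linarith [mul_add (r : ℝ) (distNearestInt (D * (a / r + β))) (|(D : ℝ)| * |β|)]

theorem sixteen_mul_rpow_sq_lt_sqrt {N σ : ℝ} (hN : 1 < N)
    (hσ : σ < 1 / 4 - Real.log 4 / Real.log N) : 16 * (N ^ σ) ^ 2 < √N := by
  have hN0 : 0 < N := by linarith
  have hfour : N ^ (Real.log 4 / Real.log N) = 4 := Real.rpow_logb hN0 hN.ne' (by norm_num)
  have hlt : N ^ σ < N ^ (1 / 4 : ℝ) / 4 := by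
    calc N ^ σ < N ^ (1 / 4 - Real.log 4 / Real.log N) := Real.rpow_lt_rpow_of_exponent_lt hN hσ
      _ = N ^ (1 / 4 : ℝ) / 4 := by rw [Real.rpow_sub hN0, hfour]
  calc 16 * (N ^ σ) ^ 2 < 16 * (N ^ (1 / 4 : ℝ) / 4) ^ 2 := by gcongr
    _ = (N ^ (1 / 4 : ℝ)) ^ (2 : ℝ) := by rw [Real.rpow_two]; ring
    _ = √N := by rw [← Real.rpow_mul hN0.le, Real.sqrt_eq_rpow]; norm_num

theorem abs_le_sqrt_sq_add_sq (x y : ℝ) : |x| ≤ √(x ^ 2 + y ^ 2) ∧ |y| ≤ √(x ^ 2 + y ^ 2) :=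
  ⟨Real.abs_le_sqrt (le_add_of_nonneg_right (sq_nonneg y)),
    Real.abs_le_sqrt (le_add_of_nonneg_left (sq_nonneg x))⟩

theorem abs_mul_sub_mul_le {x y u v A : ℝ} (hx : |x| ≤ A) (hy : |y| ≤ A) (hu : |u| ≤ A)
    (hv : |v| ≤ A) : |x * y - u * v| ≤ 2 * A ^ 2 :=
  calc |x * y - u * v| ≤ |x| * |y| + |u| * |v| := by
        rw [← abs_mul, ← abs_mul]; exact abs_sub _ _
    _ ≤ A * A + A * A := by gcongr <;> exact (abs_nonneg _).trans ‹_›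
    _ = 2 * A ^ 2 := by ring

theorem minor_arcs_congruence_lcm_general
    (N Q σ β : ℝ) (hN : 1 < N) (hσ : σ < 1/4 - Real.log 4 / Real.log N)
    (q q' : ℕ) (hq : 1 ≤ q) (hq' : 1 ≤ q')
    (hqN : (q : ℝ) < Real.sqrt N) (hq'N : (q' : ℝ) < Real.sqrt N)
    (hqQ : (q : ℝ) < Q)
    (hq'Q : (q' : ℝ) < Q)
    (a a' : ℤ) (ha : IsCoprime a (q : ℤ)) (ha' : IsCoprime a' (q' : ℤ))
    (y₁ y₂ y₁' y₂' : ℤ)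
    (hy : Real.sqrt ((y₁ : ℝ)^2 + (y₂ : ℝ)^2) < N ^ σ)
    (hy' : Real.sqrt ((y₁' : ℝ)^2 + (y₂' : ℝ)^2) < N ^ σ)
    (hβ : |β| < 2 / (Q * Real.sqrt N))
    (h1 : distNearestInt ((y₁ : ℝ) * ((a : ℝ) / q + β) - (y₁' : ℝ) * ((a' : ℝ) / q' + β))
        < 1 / (10 * N ^ (1 - σ)))
    (h2 : distNearestInt ((y₂ : ℝ) * ((a : ℝ) / q + β) - (y₂' : ℝ) * ((a' : ℝ) / q' + β))
        < 1 / (10 * N ^ (1 - σ))) :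
    (Nat.lcm q q' : ℤ) ∣ (y₂' * y₁ - y₁' * y₂) := by
  set A := N ^ σ
  have hN0 : 0 < N := by linarith
  have hA : 16 * A ^ 2 < √N := sixteen_mul_rpow_sq_lt_sqrt hN hσ
  have hε : 2 * A * (1 / (10 * N ^ (1 - σ))) = A ^ 2 / (5 * √N ^ 2) := by
    rw [Real.sq_sqrt hN0.le, Real.rpow_sub hN0, Real.rpow_one]; field_simp; ring
  obtain ⟨hy₁, hy₂⟩ := abs_le_sqrt_sq_add_sq (y₁ : ℝ) y₂
  obtain ⟨hy₁', hy₂'⟩ := abs_le_sqrt_sq_add_sq (y₁' : ℝ) y₂'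
  have hD : |((y₂' * y₁ - y₁' * y₂ : ℤ) : ℝ)| ≤ 2 * A ^ 2 := by
    push_cast
    exact abs_mul_sub_mul_le (hy₂'.trans hy'.le) (hy₁.trans hy.le) (hy₁'.trans hy'.le)
      (hy₂.trans hy.le)
  set θ := (a : ℝ) / q + β
  set θ' := (a' : ℝ) / q' + β
  have hdvd : (q : ℤ) ∣ y₂' * y₁ - y₁' * y₂ := by
    refine dvd_of_distNearestInt_le_of_lt_sqrt hq ha hqN hqQ hβ hA hD ?_
    rw [← hε, show ((y₂' * y₁ - y₁' * y₂ : ℤ) : ℝ) * θ =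
      y₂' * (y₁ * θ - y₁' * θ') - y₁' * (y₂ * θ - y₂' * θ') by push_cast; ring]
    exact distNearestInt_intCast_mul_sub_le_two_mul (hy₂'.trans hy'.le) (hy₁'.trans hy'.le)
      h1.le h2.le
  have hdvd' : (q' : ℤ) ∣ y₂' * y₁ - y₁' * y₂ := by
    refine dvd_of_distNearestInt_le_of_lt_sqrt hq' ha' hq'N hq'Q hβ hA hD ?_
    rw [← hε, show ((y₂' * y₁ - y₁' * y₂ : ℤ) : ℝ) * θ' =
      y₂ * (y₁ * θ - y₁' * θ') - y₁ * (y₂ * θ - y₂' * θ') by push_cast; ring]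
    exact distNearestInt_intCast_mul_sub_le_two_mul (hy₂.trans hy.le) (hy₁.trans hy.le)
      h1.le h2.le
  exact Int.coe_lcm_dvd_iff.mpr ⟨hdvd, hdvd'⟩

theorem minor_arcs_congruence_lcm
    (N Q σ β : ℝ) (hN : 1 < N) (hσ : σ < 1/4 - Real.log 4 / Real.log N)
    (q q' : ℕ) (hq : 1 ≤ q) (hq' : 1 ≤ q')
    (hqN : (q : ℝ) < Real.sqrt N) (hq'N : (q' : ℝ) < Real.sqrt N)
    (hQq : Q / 2 ≤ (q : ℝ)) (hqQ : (q : ℝ) < Q)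
    (hQq' : Q / 2 ≤ (q' : ℝ)) (hq'Q : (q' : ℝ) < Q)
    (a a' : ℤ) (ha : IsCoprime a (q : ℤ)) (ha' : IsCoprime a' (q' : ℤ))
    (y₁ y₂ y₁' y₂' : ℤ)
    (hy : Real.sqrt ((y₁ : ℝ)^2 + (y₂ : ℝ)^2) < N ^ σ)
    (hy' : Real.sqrt ((y₁' : ℝ)^2 + (y₂' : ℝ)^2) < N ^ σ)
    (hβ : |β| < 2 / (Q * Real.sqrt N))
    (h1 : distNearestInt ((y₁ : ℝ) * ((a : ℝ) / q + β) - (y₁' : ℝ) * ((a' : ℝ) / q' + β))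
        < 1 / (10 * N ^ (1 - σ)))
    (h2 : distNearestInt ((y₂ : ℝ) * ((a : ℝ) / q + β) - (y₂' : ℝ) * ((a' : ℝ) / q' + β))
        < 1 / (10 * N ^ (1 - σ))) :
    (Nat.lcm q q' : ℤ) ∣ (y₂' * y₁ - y₁' * y₂) :=
  minor_arcs_congruence_lcm_general N Q σ β hN hσ q q' hq hq' hqN hq'N hqQ hq'Q a a' ha ha' y₁ y₂
    y₁' y₂' hy hy' hβ h1 h2
end
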